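/- arXiv:2508.02867 — 3 statements merged into one kernel-verified Lean document; each statement's English description precedes it below -/
import Mathlib

section
/- Laver-tree characterization of Fubini positivity: let J₀,…,J_{n−1} be ideals on sets X₀,…,X_{n−1}. Then a set A ⊆ X₀×⋯×X_{n−1} is (J₀⊗⋯⊗J_{n−1})-positive if and only if there exists a (J_k)_{k<n}-Laver-tree p with [p] ⊆ A. -/
/-- Positivity for the iterated Fubini product of the ideals `J 0, …, J (n-1)`,
viewing a subset of `X₀ × ⋯ × X_{n-1}` as a set of lists of length `n`.
A set of length-`0` lists is positive iff it contains the empty sequence, and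
`A` is `(J₀ ⊗ (J₁ ⊗ ⋯))`-positive iff the set of `x` whose section
`{s | x :: s ∈ A}` is positive for the remaining ideals is `J₀`-positive. -/
def fubPos {α : Type*} : (n : ℕ) → (ℕ → Set (Set α)) → Set (List α) → Prop
  | 0, _, A => [] ∈ A
  | n + 1, J, A => {x | fubPos n (fun k => J (k + 1)) {s | x :: s ∈ A}} ∉ J 0

/-- `p` is a `(J_k)_{k<n}`-Laver-tree: a nonempty set of sequences of length `≤ n`,
closed under restriction, such that every node `s` of length `< n` splits into a
`J_{|s|}`-positive set of immediate successors. -/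
def IsLaverTree {α : Type*} (n : ℕ) (J : ℕ → Set (Set α)) (p : Set (List α)) : Prop :=
  p.Nonempty ∧ (∀ t ∈ p, ∀ s : List α, s <+: t → s ∈ p) ∧
    (∀ s ∈ p, s.length ≤ n) ∧
    ∀ s ∈ p, s.length < n → {x | s ++ [x] ∈ p} ∉ J s.length

/-- Laver-tree characterization of Fubini positivity: a set `A` of length-`n`
sequences is `(J₀ ⊗ ⋯ ⊗ J_{n-1})`-positive iff there is a `(J_k)_{k<n}`-Laver-tree
`p` whose set of maximal nodes `[p]` is contained in `A`. -/
theorem fubPos_iff_laverTree {α : Type*} (n : ℕ) (J : ℕ → Set (Set α))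
    (hdown : ∀ k, ∀ A B : Set α, A ⊆ B → B ∈ J k → A ∈ J k)
    (hempty : ∀ k, (∅ : Set α) ∈ J k)
    (A : Set (List α)) (hA : ∀ s ∈ A, s.length = n) :
    fubPos n J A ↔ ∃ p : Set (List α), IsLaverTree n J p ∧ {s ∈ p | s.length = n} ⊆ A := by
  induction n generalizing J A with
  | zero =>
    simp only [fubPos]
    constructor
    · intro h
      refine ⟨{[]}, ⟨⟨[], rfl⟩, ?_, ?_, ?_⟩, ?_⟩
      · intro t ht s hs
        simp only [Set.mem_singleton_iff] at ht ⊢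
        subst ht
        exact List.prefix_nil.mp hs
      · intro s hs
        simp only [Set.mem_singleton_iff] at hs
        subst hs; simp
      · intro s hs hlt; omega
      · rintro s ⟨hs, -⟩
        simp only [Set.mem_singleton_iff] at hs
        subst hs; exact h
    · rintro ⟨p, ⟨⟨t, ht⟩, hclosed, -, -⟩, hsub⟩
      exact hsub ⟨hclosed t ht [] (List.nil_prefix), rfl⟩
  | succ n ih =>
    constructor
    · intro h
      simp only [fubPos] at h
      set S : Set α := {x | fubPos n (fun k => J (k + 1)) {s | x :: s ∈ A}} with hS
      have key : ∀ x ∈ S, ∃ p : Set (List α),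
          IsLaverTree n (fun k => J (k + 1)) p ∧
            {s ∈ p | s.length = n} ⊆ {s | x :: s ∈ A} := by
        intro x hx
        exact (ih (fun k => J (k + 1)) (fun k => hdown (k + 1)) (fun k => hempty (k + 1))
          {s | x :: s ∈ A} (fun s hs => by
            have := hA (x :: s) hs; simpa using this)).mp hx
      choose P hP1 hP2 using key
      refine ⟨{[]} ∪ {l | ∃ x, ∃ hx : x ∈ S, ∃ s ∈ P x hx, l = x :: s}, ⟨?_, ?_, ?_, ?_⟩, ?_⟩
      · exact ⟨[], Or.inl rfl⟩
      · rintro t (ht | ⟨x, hx, s', hs', rfl⟩) s hs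
        · simp only [Set.mem_singleton_iff] at ht
          subst ht
          exact Or.inl (List.prefix_nil.mp hs)
        · rcases s with - | ⟨a, s⟩
          · exact Or.inl rfl
          · obtain ⟨rfl, hpre⟩ := List.cons_prefix_cons.mp hs
            exact Or.inr ⟨a, hx, s, (hP1 a hx).2.1 s' hs' s hpre, rfl⟩
      · rintro s (hs | ⟨x, hx, s', hs', rfl⟩)
        · simp only [Set.mem_singleton_iff] at hs; subst hs; simp
        · simp only [List.length_cons]
          exact Nat.succ_le_succ ((hP1 x hx).2.2.1 s' hs')
      · rintro s (hs | ⟨x, hx, s', hs', rfl⟩) hlt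
        · simp only [Set.mem_singleton_iff] at hs; subst hs
          intro hJ
          apply h
          refine hdown 0 _ _ ?_ hJ
          intro y hy
          refine Or.inr ⟨y, hy, [], ?_, rfl⟩
          obtain ⟨t, ht⟩ := (hP1 y hy).1
          exact (hP1 y hy).2.1 t ht [] (List.nil_prefix)
        · simp only [List.length_cons] at hlt ⊢
          intro hJ
          apply (hP1 x hx).2.2.2 s' hs' (Nat.lt_of_succ_lt_succ hlt)
          refine hdown _ _ _ ?_ hJ
          intro y hy
          exact Or.inr ⟨x, hx, s' ++ [y], hy, by simp⟩
      · rintro l ⟨(hl | ⟨x, hx, s', hs', rfl⟩), hlen⟩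
        · simp only [Set.mem_singleton_iff] at hl; subst hl; simp at hlen
        · simp only [List.length_cons] at hlen
          exact hP2 x hx ⟨hs', Nat.succ_injective hlen⟩
    · rintro ⟨p, ⟨⟨t, ht⟩, hclosed, hlen, hsplit⟩, hsub⟩
      simp only [fubPos]
      have hnil : [] ∈ p := hclosed t ht [] (List.nil_prefix)
      have hpos : {x | [x] ∈ p} ∉ J 0 := by
        have := hsplit [] hnil (by simp)
        simpa using this
      intro hJ
      apply hpos
      refine hdown 0 _ _ ?_ hJ
      intro x hx
      refine (ih (fun k => J (k + 1)) (fun k => hdown (k + 1)) (fun k => hempty (k + 1))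
        {s | x :: s ∈ A} (fun s hs => by
          have := hA (x :: s) hs; simpa using this)).mpr
        ⟨{s | x :: s ∈ p}, ⟨⟨[], hx⟩, ?_, ?_, ?_⟩, ?_⟩
      · intro t' ht' s hs
        exact hclosed (x :: t') ht' (x :: s) (List.cons_prefix_cons.mpr ⟨rfl, hs⟩)
      · intro s hs
        have := hlen (x :: s) hs
        simpa using this
      · intro s hs hlt
        have := hsplit (x :: s) hs (by simpa using Nat.succ_lt_succ hlt)
        simpa using this
      · rintro s ⟨hs, hslen⟩
        exact hsub ⟨hs, by simp [hslen]⟩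
end

section
/- If a partial order P is strongly <μ-directed closed, then its separative quotient P/∼ is <μ-directed closed: every directed subset of P/∼ of size less than μ has a lower bound in P/∼. -/
/-- Two conditions are compatible if they have a common lower bound. -/
def Compat {P : Type*} [PartialOrder P] (p q : P) : Prop := ∃ z, z ≤ p ∧ z ≤ q

/-- The separative equivalence: `p ∼ q` iff `p` and `q` are incompatible with
exactly the same conditions. -/
def sepSetoid (P : Type*) [PartialOrder P] : Setoid P where
  r p q := ∀ z, ¬Compat z p ↔ ¬Compat z q
  iseqv := ⟨fun _ _ => Iff.rfl, fun h z => (h z).symm, fun h1 h2 z => (h1 z).trans (h2 z)⟩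

/-- The separative quotient `P/∼`. -/
def SepQuot (P : Type*) [PartialOrder P] := Quotient (sepSetoid P)

/-- The ordering on the separative quotient: `[p] ⪯ [q]` iff every `r ≤ p` is
compatible with `q`. -/
def sepLE {P : Type*} [PartialOrder P] : SepQuot P → SepQuot P → Prop :=
  Quotient.lift₂ (fun p q => ∀ r, r ≤ p → Compat r q) (by
    have key : ∀ a b c d : P, (∀ z, ¬Compat z a ↔ ¬Compat z c) →
        (∀ z, ¬Compat z b ↔ ¬Compat z d) →
        (∀ r, r ≤ a → Compat r b) → ∀ r, r ≤ c → Compat r d := by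
      intro a b c d hac hbd h r hrc
      have h1 : Compat r a := by
        by_contra hn
        exact (hac r).mp hn ⟨r, le_rfl, hrc⟩
      obtain ⟨z, hzr, hza⟩ := h1
      obtain ⟨w, hwz, hwb⟩ := h z hza
      have h3 : Compat w d := by
        by_contra hn
        exact (hbd w).mpr hn ⟨w, le_rfl, hwb⟩
      obtain ⟨u, huw, hud⟩ := h3
      exact ⟨u, le_trans huw (le_trans hwz hzr), hud⟩
    intro a b c d hac hbd
    exact propext ⟨key a b c d hac hbd,
      key c d a b (fun z => (hac z).symm) (fun z => (hbd z).symm)⟩)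

/-- A subset `X` of `P` is weakly directed if any two of its elements have a
common member of `X` all of whose extensions are compatible with both. -/
def WeaklyDirected {P : Type*} [PartialOrder P] (X : Set P) : Prop :=
  ∀ p ∈ X, ∀ q ∈ X, ∃ r ∈ X, ∀ s, s ≤ r → Compat s p ∧ Compat s q

/-- `P` is strongly `<μ`-directed closed if every weakly directed subset of size
`< μ` has a lower bound. -/
def StronglyDirectedClosed {P : Type*} [PartialOrder P] (μ : Cardinal) : Prop :=
  ∀ X : Set P, WeaklyDirected X → Cardinal.mk ↥X < μ → ∃ p, ∀ q ∈ X, p ≤ q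

universe u

/-- If `P` is strongly `<μ`-directed closed, then its separative quotient `P/∼`
is `<μ`-directed closed: every directed subset of `P/∼` of size less than `μ`
has a lower bound in `P/∼`. -/
theorem sepQuot_directedClosed {P : Type u} [PartialOrder P] (μ : Cardinal.{u})
    (h : StronglyDirectedClosed (P := P) μ) :
    ∀ Y : Set (SepQuot P),
      (∀ a ∈ Y, ∀ b ∈ Y, ∃ c ∈ Y, sepLE c a ∧ sepLE c b) →
      Cardinal.mk ↥Y < μ → ∃ c : SepQuot P, ∀ a ∈ Y, sepLE c a := by
  intro Y hdir hcard
  let out : SepQuot P → P := Quotient.out (s := sepSetoid P)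
  have hout : ∀ a : SepQuot P, Quotient.mk (sepSetoid P) (out a) = a := fun a =>
    Quotient.out_eq a
  set X : Set P := out '' Y with hX
  have hwd : WeaklyDirected X := by
    intro p hp q hq
    obtain ⟨a, ha, rfl⟩ := hp
    obtain ⟨b, hb, rfl⟩ := hq
    obtain ⟨c, hc, hca, hcb⟩ := hdir a ha b hb
    refine ⟨out c, ⟨c, hc, rfl⟩, fun s hs => ?_⟩
    have h1 : sepLE (Quotient.mk (sepSetoid P) (out c)) (Quotient.mk (sepSetoid P) (out a)) := by
      rw [hout, hout]; exact hca
    have h2 : sepLE (Quotient.mk (sepSetoid P) (out c)) (Quotient.mk (sepSetoid P) (out b)) := by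
      rw [hout, hout]; exact hcb
    exact ⟨h1 s hs, h2 s hs⟩
  have hcard' : Cardinal.mk ↥X < μ :=
    lt_of_le_of_lt (Cardinal.mk_image_le) hcard
  obtain ⟨p, hp⟩ := h X hwd hcard'
  refine ⟨Quotient.mk (sepSetoid P) p, fun a ha => ?_⟩
  have : sepLE (Quotient.mk (sepSetoid P) p) (Quotient.mk (sepSetoid P) (out a)) :=
    fun r hr => ⟨r, le_rfl, le_trans hr (hp (out a) ⟨a, ha, rfl⟩)⟩
  rwa [hout] at this
end

section
/- Almost direct decidability transfers to singular limits: let δ be a singular cardinal with cf(δ) = μ and let (P, ≤, ≤₀) be a Prikry-type forcing with almost direct μ-decidability. Then (P, ≤, ≤₀) has almost direct δ-decidability: whenever τ is a P-name for an ordinal and p ∈ P forces τ < δ, there are γ < δ and p' ≤₀ p such that p' forces τ < γ. -/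
/-- A decision relation (an abstract name): `D p v` means `p` forces the name to
have value `v`. Persistence: decisions are preserved by extension. -/
def Persistent {P : Type*} [Preorder P] {V : Type*} (D : P → V → Prop) : Prop :=
  ∀ p q v, D p v → q ≤ p → D q v

/-- Coherence: decided values are unique along extensions. -/
def Coherent {P : Type*} [Preorder P] {V : Type*} (D : P → V → Prop) : Prop :=
  ∀ p q v v', D p v → q ≤ p → D q v' → v' = v

/-- Density: every condition has an extension deciding a value. -/
def Deciding {P : Type*} [Preorder P] {V : Type*} (D : P → V → Prop) : Prop :=
  ∀ p, ∃ q, q ≤ p ∧ ∃ v, D q v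

/-- `p` forces the ordinal named by `D` to be `< ν`: every decision made by an
extension of `p` is `< ν`. -/
def ForcesLt {P : Type*} [Preorder P] (D : P → Ordinal → Prop) (p : P) (ν : Ordinal) : Prop :=
  ∀ q, q ≤ p → ∀ γ, D q γ → γ < ν

/-- `(P, ≤, ≤₀)` has almost direct `ν`-decidability: whenever a name for an
ordinal is forced below `ν` by `p`, some direct extension of `p` forces it below
some `γ < ν`. -/
def AlmostDirDec {P : Type*} [Preorder P] (le0 : P → P → Prop) (ν : Ordinal) : Prop :=
  ∀ D : P → Ordinal → Prop, Persistent D → Coherent D → Deciding D →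
    ∀ p, ForcesLt D p ν → ∃ γ < ν, ∃ p', le0 p' p ∧ ForcesLt D p' γ

/-- Almost direct decidability transfers to singular limits: if `δ` is a singular
cardinal with `cf(δ) = μ` and the Prikry-type forcing `(P, ≤, ≤₀)` has almost
direct `μ`-decidability, then it has almost direct `δ`-decidability. -/
theorem almostDirDec_singular {P : Type*} [Preorder P] (le0 : P → P → Prop)
    (hrefl : ∀ p, le0 p p)
    (hrefine : ∀ p q, le0 p q → p ≤ q)
    (hPrikry : ∀ D : P → Prop → Prop, Persistent D → Coherent D → Deciding D →
      ∀ p, ∃ q, le0 q p ∧ ∃ v, D q v)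
    (δ μ : Cardinal) (hδ : ℵ₀ ≤ δ) (hμδ : μ < δ) (hcof : δ.ord.cof = μ)
    (h : AlmostDirDec le0 μ.ord) : AlmostDirDec le0 δ.ord := by
  intro D hPer hCoh hDec p hp
  -- fundamental sequence for δ.ord
  obtain ⟨f, hf⟩ := Ordinal.exists_fundamental_sequence δ.ord
  have hdom : δ.ord.cof.ord = μ.ord := by rw [hcof]
  have hcast : ∀ i, i < μ.ord → i < δ.ord.cof.ord := fun i hi => by rwa [hdom]
  set F : Ordinal → Ordinal := fun i =>
    if hi : i < μ.ord then f i (hcast i hi) else 0 with hF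
  have hFeq : ∀ i (hi : i < μ.ord), F i = f i (hcast i hi) := by
    intro i hi; simp only [hF, dif_pos hi]
  have hFlt : ∀ i, i < μ.ord → F i < δ.ord := by
    intro i hi
    rw [hFeq i hi]
    conv_rhs => rw [← hf.2.2]
    exact Ordinal.lt_blsub _ _ _
  have hFcof : ∀ γ, γ < δ.ord → ∃ i, i < μ.ord ∧ γ ≤ F i := by
    intro γ hγ
    rw [← hf.2.2, Ordinal.lt_blsub_iff] at hγ
    obtain ⟨i, hi, hle⟩ := hγ
    have hi' : i < μ.ord := by rwa [← hdom]
    exact ⟨i, hi', by rwa [hFeq i hi']⟩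
  have hFmono : ∀ i j, i < μ.ord → j < μ.ord → i < j → F i < F j := by
    intro i j hi hj hij
    rw [hFeq i hi, hFeq j hj]
    exact hf.2.1 _ _ hij
  -- the index name
  set g : Ordinal → Ordinal := fun γ => sInf {i | i < μ.ord ∧ γ ≤ F i} with hg
  set D' : P → Ordinal → Prop := fun q i => ∃ γ, D q γ ∧ i = g γ with hD'
  have hPer' : Persistent D' := by
    rintro p q v ⟨γ, hγ, rfl⟩ hq
    exact ⟨γ, hPer p q γ hγ hq, rfl⟩
  have hCoh' : Coherent D' := by
    rintro p q v v' ⟨γ, hγ, rfl⟩ hq ⟨γ', hγ', rfl⟩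
    rw [hCoh p q γ γ' hγ hq hγ']
  have hDec' : Deciding D' := by
    intro p
    obtain ⟨q, hq, v, hv⟩ := hDec p
    exact ⟨q, hq, g v, v, hv, rfl⟩
  have hmem : ∀ γ, γ < δ.ord → g γ < μ.ord ∧ γ ≤ F (g γ) := by
    intro γ hγ
    obtain ⟨i, hi, hle⟩ := hFcof γ hγ
    exact csInf_mem (⟨i, hi, hle⟩ : {i | i < μ.ord ∧ γ ≤ F i}.Nonempty)
  have hp' : ForcesLt D' p μ.ord := by
    rintro q hq i ⟨γ, hγ, rfl⟩
    exact (hmem γ (hp q hq γ hγ)).1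
  obtain ⟨i₀, hi₀, p', hle0, hforce⟩ := h D' hPer' hCoh' hDec' p hp'
  refine ⟨F i₀, hFlt i₀ hi₀, p', hle0, ?_⟩
  intro q hq γ hγ
  have hqp : q ≤ p := le_trans hq (hrefine p' p hle0)
  have hγδ : γ < δ.ord := hp q hqp γ hγ
  have h1 : g γ < i₀ := hforce q hq (g γ) ⟨γ, hγ, rfl⟩
  have h2 := hmem γ hγδ
  exact lt_of_le_of_lt h2.2 (hFmono _ _ h2.1 hi₀ h1)
end
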